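/- arXiv:2008.08858 — 3 statements merged into one kernel-verified Lean document; each statement's English description precedes it below -/
import Mathlib

section
/- Let f : [1,∞) → [1,∞) be an admissible function and let X = (X_k)_{k≥1} be independent Bernoulli random variables with P[X_k = 1] = 1/(k f(k)). Let N_n = |E_X ∩ (2^n, 2^{n+1}]|. Then almost surely, limsup_{n→∞} N_n · N_{n+1} = 0, i.e., for all sufficiently large n, N_n · N_{n+1} = 0. -/
/-!
The expected number of points of `E_X` in the `n`-th dyadic block is at most
`2^n · 1/(2^n f(2^n)) = 1/f(2^n)`, so by the union bound and the independence of the two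
disjoint blocks, `P[N_n N_{n+1} ≠ 0] ≤ 1/(f(2^n) f(2^{n+1})) ≤ 1/f(2^n)^2`. Comparing with the
integral over `[2^{n-1}, 2^n)` (Cauchy condensation), `∑ 1/f(2^n)^2 ≤ 2 ∫_1^∞ dx/(x f(x)^2) < ∞`,
and Borel–Cantelli concludes.
-/

open MeasureTheory ProbabilityTheory

/-- A function `f : [1,∞) → [1,∞)` is admissible if it is non-decreasing and for every
`ε > 0`, `∫_1^∞ dx/(x f(x)) = ∞` and `∫_1^∞ dx/(x f(x)^{1+ε}) < ∞`. -/
def Admissible (f : ℝ → ℝ) : Prop :=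
  (∀ x, 1 ≤ x → 1 ≤ f x) ∧ MonotoneOn f (Set.Ici 1) ∧
  (∫⁻ x in Set.Ici (1 : ℝ), ENNReal.ofReal (1 / (x * f x)) = ⊤) ∧
  ∀ ε : ℝ, 0 < ε → ∫⁻ x in Set.Ici (1 : ℝ), ENNReal.ofReal (1 / (x * f x ^ (1 + ε))) ≠ ⊤

theorem tsum_ofReal_two_pow_succ_le_lintegral {g : ℝ → ℝ} (hg0 : ∀ x, 1 ≤ x → 0 ≤ g x)
    (hg : AntitoneOn g (Set.Ici 1)) :
    ∑' n : ℕ, ENNReal.ofReal (g (2 ^ (n + 1))) ≤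
      2 * ∫⁻ x in Set.Ici (1 : ℝ), ENNReal.ofReal (g x / x) := by
  have one_le_two_pow (n : ℕ) : (1 : ℝ) ≤ 2 ^ n := one_le_pow₀ (by norm_num)
  have hblock (n : ℕ) : ENNReal.ofReal (g (2 ^ (n + 1))) ≤
      2 * ∫⁻ x in Set.Ico ((2 : ℝ) ^ n) (2 ^ (n + 1)), ENNReal.ofReal (g x / x) := by
    calc ENNReal.ofReal (g (2 ^ (n + 1)))
        = 2 * (ENNReal.ofReal (g (2 ^ (n + 1)) / 2 ^ (n + 1)) *
            volume (Set.Ico ((2 : ℝ) ^ n) (2 ^ (n + 1)))) := by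
          rw [Real.volume_Ico, ← ENNReal.ofReal_mul (div_nonneg (hg0 _ (one_le_two_pow _))
            (by positivity)), ← ENNReal.ofReal_ofNat 2, ← ENNReal.ofReal_mul zero_le_two]
          congr 1
          field_simp
          ring
      _ ≤ 2 * ∫⁻ x in Set.Ico ((2 : ℝ) ^ n) (2 ^ (n + 1)), ENNReal.ofReal (g x / x) := by
          rw [← setLIntegral_const]
          gcongr 2 * ?_
          refine setLIntegral_mono' measurableSet_Ico fun x ⟨hx1, hx2⟩ => ?_
          have hx : 1 ≤ x := (one_le_two_pow n).trans hx1
          exact ENNReal.ofReal_le_ofReal (div_le_div₀ (hg0 x hx)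
            (hg hx (one_le_two_pow _) hx2.le) (by linarith) hx2.le)
  have hdisj : Pairwise (Function.onFun Disjoint
      fun n : ℕ => Set.Ico ((2 : ℝ) ^ n) (2 ^ (n + 1))) :=
    (pow_right_mono₀ (by norm_num : (1 : ℝ) ≤ 2)).pairwise_disjoint_on_Ico_succ
  have hsub : (⋃ n : ℕ, Set.Ico ((2 : ℝ) ^ n) (2 ^ (n + 1))) ⊆ Set.Ici 1 :=
    Set.iUnion_subset fun n x hx => (one_le_two_pow n).trans hx.1
  calc ∑' n : ℕ, ENNReal.ofReal (g (2 ^ (n + 1)))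
      ≤ ∑' n : ℕ, 2 * ∫⁻ x in Set.Ico ((2 : ℝ) ^ n) (2 ^ (n + 1)), ENNReal.ofReal (g x / x) :=
        ENNReal.tsum_le_tsum hblock
    _ = 2 * ∫⁻ x in ⋃ n : ℕ, Set.Ico ((2 : ℝ) ^ n) (2 ^ (n + 1)), ENNReal.ofReal (g x / x) := by
        rw [ENNReal.tsum_mul_left, lintegral_iUnion (fun _ => measurableSet_Ico) hdisj]
    _ ≤ 2 * ∫⁻ x in Set.Ici (1 : ℝ), ENNReal.ofReal (g x / x) :=
        mul_le_mul_right (lintegral_mono_set hsub) 2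

theorem measure_biUnion_inter_le_sum_mul_sum {Ω ι : Type*} [MeasurableSpace Ω] (μ : Measure Ω)
    (E : ι → Set Ω) (A B : Finset ι) (hE : ∀ i ∈ A, ∀ j ∈ B, μ (E i ∩ E j) = μ (E i) * μ (E j)) :
    μ (⋃ i ∈ A, ⋃ j ∈ B, E i ∩ E j) ≤ (∑ i ∈ A, μ (E i)) * ∑ j ∈ B, μ (E j) :=
  calc μ (⋃ i ∈ A, ⋃ j ∈ B, E i ∩ E j)
      ≤ ∑ i ∈ A, ∑ j ∈ B, μ (E i ∩ E j) :=
        (measure_biUnion_finset_le _ _).trans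
          (Finset.sum_le_sum fun _ _ => measure_biUnion_finset_le _ _)
    _ = (∑ i ∈ A, μ (E i)) * ∑ j ∈ B, μ (E j) := by
        rw [Finset.sum_mul_sum]
        exact Finset.sum_congr rfl fun i hi => Finset.sum_congr rfl fun j hj => hE i hi j hj

theorem sum_Ioc_two_pow_ofReal_inv_le {f : ℝ → ℝ} (hf1 : ∀ x, 1 ≤ x → 1 ≤ f x)
    (hmono : MonotoneOn f (Set.Ici 1)) (n : ℕ) :
    ∑ k ∈ Finset.Ioc (2 ^ n : ℕ) (2 ^ (n + 1)), ENNReal.ofReal (1 / (k * f k)) ≤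
      ENNReal.ofReal (1 / f (2 ^ n)) := by
  have h2n : (1 : ℝ) ≤ 2 ^ n := one_le_pow₀ (by norm_num)
  have hfpos : 0 < f (2 ^ n) := one_pos.trans_le (hf1 _ h2n)
  have hterm : ∀ k ∈ Finset.Ioc (2 ^ n : ℕ) (2 ^ (n + 1)),
      ENNReal.ofReal (1 / (k * f k)) ≤ ENNReal.ofReal (1 / (2 ^ n * f (2 ^ n))) := by
    intro k hk
    have hk : (2 : ℝ) ^ n ≤ k := by exact_mod_cast (Finset.mem_Ioc.1 hk).1.le
    refine ENNReal.ofReal_le_ofReal (one_div_le_one_div_of_le (by positivity) ?_)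
    exact mul_le_mul hk (hmono h2n (h2n.trans hk) hk) hfpos.le (by positivity)
  have hcard : (Finset.Ioc (2 ^ n : ℕ) (2 ^ (n + 1))).card = 2 ^ n := by
    rw [Nat.card_Ioc, pow_succ]
    omega
  calc ∑ k ∈ Finset.Ioc (2 ^ n : ℕ) (2 ^ (n + 1)), ENNReal.ofReal (1 / (k * f k))
      ≤ (2 ^ n : ℕ) • ENNReal.ofReal (1 / (2 ^ n * f (2 ^ n))) :=
        (Finset.sum_le_card_nsmul _ _ _ hterm).trans_eq (by rw [hcard])
    _ = ENNReal.ofReal (1 / f (2 ^ n)) := by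
        rw [nsmul_eq_mul, ← ENNReal.ofReal_natCast, ← ENNReal.ofReal_mul (by positivity)]
        congr 1
        push_cast
        field_simp

theorem tsum_ofReal_inv_sq_two_pow_ne_top {f : ℝ → ℝ} (hf1 : ∀ x, 1 ≤ x → 1 ≤ f x)
    (hmono : MonotoneOn f (Set.Ici 1))
    (hint : ∫⁻ x in Set.Ici (1 : ℝ), ENNReal.ofReal (1 / (x * f x ^ ((1 : ℝ) + 1))) ≠ ⊤) :
    ∑' n : ℕ, ENNReal.ofReal (1 / f (2 ^ n) ^ 2) ≠ ⊤ := by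
  have hg0 (x : ℝ) (hx : 1 ≤ x) : 0 ≤ 1 / f x ^ 2 := by
    have := hf1 x hx
    positivity
  have hg : AntitoneOn (fun x => 1 / f x ^ 2) (Set.Ici 1) := fun x hx y hy hxy =>
    one_div_le_one_div_of_le (pow_pos (one_pos.trans_le (hf1 x hx)) 2)
      (pow_le_pow_left₀ (by linarith [hf1 x hx]) (hmono hx hy hxy) 2)
  have hintegrand : (fun x => ENNReal.ofReal (1 / f x ^ 2 / x)) =
      fun x => ENNReal.ofReal (1 / (x * f x ^ ((1 : ℝ) + 1))) := by
    funext x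
    rw [div_div, mul_comm, one_add_one_eq_two, Real.rpow_two]
  rw [tsum_eq_zero_add' ENNReal.summable]
  refine ENNReal.add_ne_top.2 ⟨ENNReal.ofReal_ne_top, ne_top_of_le_ne_top
    (ENNReal.mul_ne_top (ENNReal.ofNat_ne_top (n := 2)) hint) ?_⟩
  rw [← hintegrand]
  exact tsum_ofReal_two_pow_succ_le_lintegral hg0 hg

theorem measure_setOf_mul_succ_ne_zero_le {Ω : Type*} [MeasurableSpace Ω] {μ : Measure Ω}
    {f : ℝ → ℝ} (hf1 : ∀ x, 1 ≤ x → 1 ≤ f x) (hmono : MonotoneOn f (Set.Ici 1))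
    {X : ℕ → Ω → Bool} (hind : iIndepFun X μ)
    (hprob : ∀ k : ℕ, 1 ≤ k → μ {ω | X k ω = true} = ENNReal.ofReal (1 / (k * f k)))
    {N : ℕ → Ω → ℕ}
    (hN : ∀ n ω, N n ω = ((Finset.Ioc (2 ^ n) (2 ^ (n + 1))).filter
      (fun k => X k ω = true)).card) (n : ℕ) :
    μ {ω | N n ω * N (n + 1) ω ≠ 0} ≤ ENNReal.ofReal (1 / f (2 ^ n) ^ 2) := by
  set E : ℕ → Set Ω := fun k => {ω | X k ω = true}
  have hblock (m : ℕ) :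
      ∑ k ∈ Finset.Ioc (2 ^ m : ℕ) (2 ^ (m + 1)), μ (E k) ≤ ENNReal.ofReal (1 / f (2 ^ m)) := by
    rw [Finset.sum_congr rfl fun k hk =>
      hprob k (Nat.one_le_of_lt (Finset.mem_Ioc.1 hk).1)]
    exact sum_Ioc_two_pow_ofReal_inv_le hf1 hmono m
  have hsub : {ω | N n ω * N (n + 1) ω ≠ 0} ⊆ ⋃ k ∈ Finset.Ioc (2 ^ n : ℕ) (2 ^ (n + 1)),
      ⋃ l ∈ Finset.Ioc (2 ^ (n + 1) : ℕ) (2 ^ (n + 1 + 1)), E k ∩ E l := by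
    intro ω hω
    obtain ⟨⟨k, hk⟩, ⟨l, hl⟩⟩ : (_ : Finset ℕ).Nonempty ∧ (_ : Finset ℕ).Nonempty := by
      simpa only [Set.mem_ofPred_eq, hN, mul_ne_zero_iff, Finset.card_ne_zero] using hω
    rw [Finset.mem_filter] at hk hl
    simp only [Set.mem_iUnion]
    exact ⟨k, hk.1, l, hl.1, hk.2, hl.2⟩
  have hindep : ∀ k ∈ Finset.Ioc (2 ^ n : ℕ) (2 ^ (n + 1)),
      ∀ l ∈ Finset.Ioc (2 ^ (n + 1) : ℕ) (2 ^ (n + 1 + 1)), μ (E k ∩ E l) = μ (E k) * μ (E l) := by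
    intro k hk l hl
    have hkl : k ≠ l := ((Finset.mem_Ioc.1 hk).2.trans_lt (Finset.mem_Ioc.1 hl).1).ne
    exact (hind.indepFun hkl).measure_inter_preimage_eq_mul {true} {true}
      (measurableSet_singleton _) (measurableSet_singleton _)
  have h2n : (1 : ℝ) ≤ 2 ^ n := one_le_pow₀ (by norm_num)
  have hfpos : 0 < f (2 ^ n) := one_pos.trans_le (hf1 _ h2n)
  have hfle : f (2 ^ n) ≤ f (2 ^ (n + 1)) :=
    hmono h2n (one_le_pow₀ (by norm_num : (1 : ℝ) ≤ 2)) (pow_le_pow_right₀ (by norm_num) n.le_succ)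
  calc μ {ω | N n ω * N (n + 1) ω ≠ 0}
      ≤ (∑ k ∈ Finset.Ioc (2 ^ n : ℕ) (2 ^ (n + 1)), μ (E k)) *
          ∑ l ∈ Finset.Ioc (2 ^ (n + 1) : ℕ) (2 ^ (n + 1 + 1)), μ (E l) :=
        (measure_mono hsub).trans (measure_biUnion_inter_le_sum_mul_sum μ E _ _ hindep)
    _ ≤ ENNReal.ofReal (1 / f (2 ^ n)) * ENNReal.ofReal (1 / f (2 ^ (n + 1))) :=
        mul_le_mul' (hblock n) (hblock (n + 1))
    _ ≤ ENNReal.ofReal (1 / f (2 ^ n) ^ 2) := by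
        rw [← ENNReal.ofReal_mul (by positivity), div_mul_div_comm, one_mul, sq]
        exact ENNReal.ofReal_le_ofReal (one_div_le_one_div_of_le (by positivity)
          (mul_le_mul_of_nonneg_left hfle hfpos.le))

theorem stmt4_general {Ω : Type*} [MeasurableSpace Ω] (μ : Measure Ω)
    (f : ℝ → ℝ) (hf : Admissible f)
    (X : ℕ → Ω → Bool)
    (hind : iIndepFun X μ)
    (hprob : ∀ k : ℕ, 1 ≤ k → μ {ω | X k ω = true} = ENNReal.ofReal (1 / (k * f k)))
    (N : ℕ → Ω → ℕ)
    (hN : ∀ n ω, N n ω = ((Finset.Ioc (2 ^ n) (2 ^ (n + 1))).filter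
      (fun k => X k ω = true)).card) :
    ∀ᵐ ω ∂μ, ∀ᶠ n in Filter.atTop, N n ω * N (n + 1) ω = 0 := by
  obtain ⟨hf1, hmono, -, hint⟩ := hf
  have hsum : ∑' n, μ {ω | N n ω * N (n + 1) ω ≠ 0} ≠ ⊤ :=
    ne_top_of_le_ne_top (tsum_ofReal_inv_sq_two_pow_ne_top hf1 hmono (hint 1 one_pos))
      (ENNReal.tsum_le_tsum (measure_setOf_mul_succ_ne_zero_le hf1 hmono hind hprob hN))
  filter_upwards [ae_eventually_notMem hsum] with ω hω
  exact hω.mono fun n hn => not_ne_iff.1 hn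

theorem stmt4 {Ω : Type*} [MeasurableSpace Ω] (μ : Measure Ω) [IsProbabilityMeasure μ]
    (f : ℝ → ℝ) (hf : Admissible f)
    (X : ℕ → Ω → Bool) (hmeas : ∀ k, Measurable (X k))
    (hind : iIndepFun X μ)
    (hprob : ∀ k : ℕ, 1 ≤ k → μ {ω | X k ω = true} = ENNReal.ofReal (1 / (k * f k)))
    (N : ℕ → Ω → ℕ)
    (hN : ∀ n ω, N n ω = ((Finset.Ioc (2 ^ n) (2 ^ (n + 1))).filter
      (fun k => X k ω = true)).card) :
    ∀ᵐ ω ∂μ, ∀ᶠ n in Filter.atTop, N n ω * N (n + 1) ω = 0 :=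
  stmt4_general μ f hf X hind hprob N hN
end

section
/- Let α > 0, f : [1,∞) → [1,∞) admissible, C = ⌊1/α⌋, and X = (X_k) independent Bernoulli with P[X_k=1] = 1/(k f(k)^α). For any a > 1 and N_n = |E_X ∩ (a^n, a^{n+1}]|, we have Σ_n P[N_n ≥ C+1] < ∞, hence almost surely N_n ≤ C for all sufficiently large n. -/
open MeasureTheory ProbabilityTheory

/-!
By independence, `P[N_n ≥ m]` is at most the sum, over the `m`-subsets of the block
`(a^n, a^(n+1)]`, of the products of their probabilities, hence at most
`(∑_{k in block} P[X_k = 1])^m ≤ (a / f(a^n)^α)^m`. For `m = C + 1` the exponent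
`β = α (C + 1)` exceeds `1`, and comparing `∑ₙ f(a^n)^(-β)` block by block with
`∫_1^∞ dx / (x f(x)^β) < ∞` (using that `f` is non-decreasing) shows that these bounds are
summable. Borel–Cantelli gives the almost sure statement.
-/

open Finset Set

theorem Finset.sum_powersetCard_prod_le_pow {ι R : Type*} [CommSemiring R] [PartialOrder R]
    [CanonicallyOrderedAdd R] [IsOrderedRing R] (p : ι → R) (I : Finset ι) (m : ℕ) :
    ∑ S ∈ I.powersetCard m, ∏ k ∈ S, p k ≤ (∑ k ∈ I, p k) ^ m := by
  classical
  induction I using Finset.induction generalizing m with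
  | empty => cases m <;> simp
  | @insert b J hbJ ih =>
    cases m with
    | zero => simp
    | succ m =>
      have hbT : ∀ T ∈ J.powersetCard m, b ∉ T := fun T hT hb =>
        hbJ ((mem_powersetCard.1 hT).1 hb)
      have hdisj : Disjoint (J.powersetCard (m + 1)) ((J.powersetCard m).image (insert b)) := by
        refine disjoint_right.2 fun S hS hS' => ?_
        obtain ⟨T, -, rfl⟩ := mem_image.1 hS
        exact hbJ ((mem_powersetCard.1 hS').1 (mem_insert_self b T))
      have hinj : InjOn (insert b) (J.powersetCard m : Set (Finset ι)) := fun S hS T hT h => by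
        rw [← erase_insert (hbT S hS), ← erase_insert (hbT T hT), h]
      set s := ∑ k ∈ J, p k
      calc ∑ S ∈ (insert b J).powersetCard (m + 1), ∏ k ∈ S, p k
          = ∑ S ∈ J.powersetCard (m + 1), ∏ k ∈ S, p k
              + p b * ∑ T ∈ J.powersetCard m, ∏ k ∈ T, p k := by
            rw [powersetCard_succ_insert hbJ, sum_union hdisj, sum_image hinj, mul_sum]
            exact congrArg _ (sum_congr rfl fun T hT => prod_insert (hbT T hT))
        _ ≤ s ^ (m + 1) + p b * s ^ m := by gcongr; exacts [ih _, ih _]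
        _ = (p b + s) * s ^ m := by ring
        _ ≤ (p b + s) ^ (m + 1) := by rw [pow_succ']; gcongr; exact le_add_self
        _ = (∑ k ∈ insert b J, p k) ^ (m + 1) := by rw [sum_insert hbJ]

theorem ProbabilityTheory.iIndepFun.measure_le_card_filter_le_pow {Ω ι : Type*}
    [MeasurableSpace Ω] {μ : Measure Ω} {X : ι → Ω → Bool} (hX : iIndepFun X μ)
    (I : Finset ι) (m : ℕ) :
    μ {ω | m ≤ #{k ∈ I | X k ω = true}} ≤ (∑ k ∈ I, μ {ω | X k ω = true}) ^ m := by
  have hcover : {ω | m ≤ #{k ∈ I | X k ω = true}}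
      ⊆ ⋃ S ∈ I.powersetCard m, ⋂ k ∈ S, {ω | X k ω = true} := by
    intro ω hω
    obtain ⟨S, hS, hcard⟩ := exists_subset_card_eq hω
    exact mem_biUnion (mem_powersetCard.2 ⟨hS.trans (filter_subset _ _), hcard⟩)
      (mem_biInter fun k hk => (mem_filter.1 (hS hk)).2)
  calc μ {ω | m ≤ #{k ∈ I | X k ω = true}}
      ≤ ∑ S ∈ I.powersetCard m, μ (⋂ k ∈ S, {ω | X k ω = true}) :=
        (measure_mono hcover).trans (measure_biUnion_finset_le _ _)
    _ = ∑ S ∈ I.powersetCard m, ∏ k ∈ S, μ {ω | X k ω = true} :=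
        sum_congr rfl fun S _ => hX.meas_biInter fun k _ => ⟨{true}, trivial, rfl⟩
    _ ≤ _ := sum_powersetCard_prod_le_pow _ _ _

theorem Nat.card_setOf_and_lt_cast_le {R : Type*} [Semiring R] [LinearOrder R]
    [IsStrictOrderedRing R] [FloorSemiring R] (P : ℕ → Prop) [DecidablePred P] {x : R}
    (hx : 0 ≤ x) (y : R) :
    Nat.card {k : ℕ | P k ∧ x < k ∧ (k : R) ≤ y}
      = #{k ∈ Finset.Ioc ⌊x⌋₊ ⌊y⌋₊ | P k} := by
  have hle_floor : ∀ k : ℕ, x < k → (k ≤ ⌊y⌋₊ ↔ (k : R) ≤ y) := fun k hxk =>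
    Nat.le_floor_iff' (Nat.cast_pos.1 (hx.trans_lt hxk)).ne'
  rw [Nat.card_coe_set_eq, ← ncard_coe_finset]
  congr 1
  ext k
  simp only [mem_ofPred_eq, coe_filter, Finset.mem_Ioc, Nat.floor_lt hx]
  constructor
  · rintro ⟨hP, hxk, hky⟩
    exact ⟨⟨hxk, (hle_floor k hxk).2 hky⟩, hP⟩
  · rintro ⟨⟨hxk, hky⟩, hP⟩
    exact ⟨hP, hxk, (hle_floor k hxk).1 hky⟩

section MonotoneWeight

variable {g : ℝ → ℝ}

theorem sum_Ioc_floor_ofReal_le (hg : MonotoneOn g (Ici 1)) (hg0 : ∀ x, 1 ≤ x → 0 < g x)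
    {x : ℝ} (hx : 1 ≤ x) {y : ℝ} (hy : 0 ≤ y) :
    ∑ k ∈ Finset.Ioc ⌊x⌋₊ ⌊y⌋₊, ENNReal.ofReal (1 / (k * g k))
      ≤ ENNReal.ofReal (y / (x * g x)) := by
  have hterm : ∀ k ∈ Finset.Ioc ⌊x⌋₊ ⌊y⌋₊,
      ENNReal.ofReal (1 / (k * g k)) ≤ ENNReal.ofReal (1 / (x * g x)) := by
    intro k hk
    have hxk : x < k := (Nat.floor_lt (by linarith)).1 (Finset.mem_Ioc.1 hk).1
    gcongr
    · exact mul_pos (by linarith) (hg0 x hx)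
    · exact (hg0 x hx).le
    · exact hg hx (hx.trans hxk.le) hxk.le
  have hcard : (#(Finset.Ioc ⌊x⌋₊ ⌊y⌋₊) : ℝ) ≤ y := by
    rw [Nat.card_Ioc]
    exact (Nat.cast_le.2 (Nat.sub_le _ _)).trans (Nat.floor_le hy)
  calc ∑ k ∈ Finset.Ioc ⌊x⌋₊ ⌊y⌋₊, ENNReal.ofReal (1 / (k * g k))
      ≤ #(Finset.Ioc ⌊x⌋₊ ⌊y⌋₊) • ENNReal.ofReal (1 / (x * g x)) :=
        sum_le_card_nsmul _ _ _ hterm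
    _ ≤ ENNReal.ofReal (y / (x * g x)) := by
      rw [nsmul_eq_mul, ← ENNReal.ofReal_natCast, ← ENNReal.ofReal_mul (by positivity),
        mul_one_div]
      gcongr
      exact (mul_pos (by linarith) (hg0 x hx)).le

theorem ofReal_le_setLIntegral_Ioc (hg : MonotoneOn g (Ici 1)) (hg0 : ∀ x, 1 ≤ x → 0 < g x)
    {u v : ℝ} (hu : 1 ≤ u) (huv : u ≤ v) :
    ENNReal.ofReal ((1 - u / v) / g v) ≤ ∫⁻ x in Ioc u v, ENNReal.ofReal (1 / (x * g x)) := by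
  have hv : 0 < v := by linarith
  have hbound : ∀ x ∈ Ioc u v,
      ENNReal.ofReal (1 / (v * g v)) ≤ ENNReal.ofReal (1 / (x * g x)) := by
    rintro x ⟨hux, hxv⟩
    have hx : 1 ≤ x := hu.trans hux.le
    gcongr
    · exact mul_pos (by linarith) (hg0 x hx)
    · exact (hg0 x hx).le
    · exact hg hx (hx.trans hxv) hxv
  calc ENNReal.ofReal ((1 - u / v) / g v)
      = ENNReal.ofReal (1 / (v * g v)) * volume (Ioc u v) := by
        rw [Real.volume_Ioc, ← ENNReal.ofReal_mul (by have := hg0 v (hu.trans huv); positivity)]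
        congr 1
        field_simp
    _ = ∫⁻ _ in Ioc u v, ENNReal.ofReal (1 / (v * g v)) := (setLIntegral_const _ _).symm
    _ ≤ _ := setLIntegral_mono' measurableSet_Ioc hbound

theorem tsum_ofReal_one_div_comp_pow_succ_le_lintegral (hg : MonotoneOn g (Ici 1))
    (hg0 : ∀ x, 1 ≤ x → 0 < g x) {a : ℝ} (ha : 1 < a) :
    ENNReal.ofReal (1 - a⁻¹) * ∑' n : ℕ, ENNReal.ofReal (1 / g (a ^ (n + 1)))
      ≤ ∫⁻ x in Ici 1, ENNReal.ofReal (1 / (x * g x)) := by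
  have hmono : Monotone (fun n : ℕ => a ^ n) := pow_right_mono₀ ha.le
  calc ENNReal.ofReal (1 - a⁻¹) * ∑' n : ℕ, ENNReal.ofReal (1 / g (a ^ (n + 1)))
      = ∑' n : ℕ, ENNReal.ofReal ((1 - a ^ n / a ^ (n + 1)) / g (a ^ (n + 1))) := by
        rw [← ENNReal.tsum_mul_left]
        refine tsum_congr fun n => ?_
        rw [← ENNReal.ofReal_mul (by simp [inv_le_one_of_one_le₀ ha.le])]
        congr 1
        field_simp
        ring
    _ ≤ ∑' n : ℕ, ∫⁻ x in Ioc (a ^ n) (a ^ (n + 1)), ENNReal.ofReal (1 / (x * g x)) :=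
        ENNReal.tsum_le_tsum fun n =>
          ofReal_le_setLIntegral_Ioc hg hg0 (one_le_pow₀ ha.le) (hmono n.le_succ)
    _ = ∫⁻ x in ⋃ n : ℕ, Ioc (a ^ n) (a ^ (n + 1)), ENNReal.ofReal (1 / (x * g x)) :=
        (lintegral_iUnion (fun _ => measurableSet_Ioc)
          hmono.pairwise_disjoint_on_Ioc_succ _).symm
    _ ≤ _ := lintegral_mono_set (iUnion_subset fun n x hx => (one_le_pow₀ ha.le).trans hx.1.le)

theorem tsum_ofReal_one_div_comp_pow_ne_top (hg : MonotoneOn g (Ici 1))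
    (hg0 : ∀ x, 1 ≤ x → 0 < g x) {a : ℝ} (ha : 1 < a)
    (hint : ∫⁻ x in Ici 1, ENNReal.ofReal (1 / (x * g x)) ≠ ⊤) :
    ∑' n : ℕ, ENNReal.ofReal (1 / g (a ^ n)) ≠ ⊤ := by
  have hc : ENNReal.ofReal (1 - a⁻¹) ≠ 0 := by simpa using inv_lt_one_of_one_lt₀ ha
  have htail : ∑' n : ℕ, ENNReal.ofReal (1 / g (a ^ (n + 1))) ≠ ⊤ := by
    intro htop
    have hle := tsum_ofReal_one_div_comp_pow_succ_le_lintegral hg hg0 ha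
    rw [htop, ENNReal.mul_top hc, top_le_iff] at hle
    exact hint hle
  rw [tsum_eq_zero_add' ENNReal.summable]
  exact ENNReal.add_ne_top.2 ⟨ENNReal.ofReal_ne_top, htail⟩

end MonotoneWeight

namespace Admissible

variable {f : ℝ → ℝ}

theorem pos (hf : Admissible f) {x : ℝ} (hx : 1 ≤ x) : 0 < f x :=
  one_pos.trans_le (hf.1 x hx)

theorem rpow_pos (hf : Admissible f) (r : ℝ) {x : ℝ} (hx : 1 ≤ x) : 0 < f x ^ r :=
  Real.rpow_pos_of_pos (hf.pos hx) r

theorem monotoneOn_rpow (hf : Admissible f) {r : ℝ} (hr : 0 ≤ r) :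
    MonotoneOn (fun x => f x ^ r) (Ici 1) := fun _ hx _ hy hxy =>
  Real.rpow_le_rpow (hf.pos hx).le (hf.2.1 hx hy hxy) hr

theorem tsum_ofReal_one_div_rpow_comp_pow_ne_top (hf : Admissible f) {β : ℝ} (hβ : 1 < β)
    {a : ℝ} (ha : 1 < a) :
    ∑' n : ℕ, ENNReal.ofReal (1 / f (a ^ n) ^ β) ≠ ⊤ := by
  have hint := hf.2.2.2 (β - 1) (sub_pos.2 hβ)
  rw [add_sub_cancel] at hint
  exact tsum_ofReal_one_div_comp_pow_ne_top (hf.monotoneOn_rpow (by linarith))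
    (fun x hx => hf.rpow_pos β hx) ha hint

theorem measure_le_card_filter_Ioc_le {Ω : Type*} [MeasurableSpace Ω] {μ : Measure Ω}
    {X : ℕ → Ω → Bool} (hX : iIndepFun X μ) (hf : Admissible f) {α : ℝ} (hα : 0 ≤ α)
    (hprob : ∀ k : ℕ, 1 ≤ k → μ {ω | X k ω = true} = ENNReal.ofReal (1 / (k * f k ^ α)))
    {a : ℝ} (ha : 1 < a) (n m : ℕ) :
    μ {ω | m ≤ #{k ∈ Finset.Ioc ⌊a ^ n⌋₊ ⌊a ^ (n + 1)⌋₊ | X k ω = true}}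
      ≤ ENNReal.ofReal (a ^ m) * ENNReal.ofReal (1 / f (a ^ n) ^ (α * m)) := by
  have hx : 1 ≤ a ^ n := one_le_pow₀ ha.le
  have hblock : ∑ k ∈ Finset.Ioc ⌊a ^ n⌋₊ ⌊a ^ (n + 1)⌋₊, μ {ω | X k ω = true}
      ≤ ENNReal.ofReal (a / f (a ^ n) ^ α) := by
    rw [sum_congr rfl fun k hk => hprob k (Nat.one_le_of_lt (Finset.mem_Ioc.1 hk).1)]
    convert sum_Ioc_floor_ofReal_le (hf.monotoneOn_rpow hα) (fun x hx => hf.rpow_pos α hx) hx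
      (y := a ^ (n + 1)) (by positivity) using 2
    have := (hf.rpow_pos α hx).ne'
    rw [pow_succ]
    field_simp
  calc _
      ≤ (∑ k ∈ Finset.Ioc ⌊a ^ n⌋₊ ⌊a ^ (n + 1)⌋₊, μ {ω | X k ω = true}) ^ m :=
        hX.measure_le_card_filter_le_pow _ m
    _ ≤ ENNReal.ofReal (a / f (a ^ n) ^ α) ^ m := by gcongr
    _ = _ := by
      rw [← ENNReal.ofReal_pow (div_nonneg (by linarith) (hf.rpow_pos α hx).le),
        ← ENNReal.ofReal_mul (by positivity), Real.rpow_mul_natCast (hf.pos hx).le, div_pow,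
        mul_one_div]

end Admissible

theorem stmt7_general {Ω : Type*} [MeasurableSpace Ω] (μ : Measure Ω)
    (α : ℝ) (hα : 0 < α)
    (f : ℝ → ℝ) (hf : Admissible f)
    (C : ℕ) (hC : C = Nat.floor α⁻¹)
    (X : ℕ → Ω → Bool)
    (hind : iIndepFun X μ)
    (hprob : ∀ k : ℕ, 1 ≤ k → μ {ω | X k ω = true} = ENNReal.ofReal (1 / (k * f k ^ α)))
    (a : ℝ) (ha : 1 < a)
    (N : ℕ → Ω → ℕ)
    (hN : ∀ n ω, (N n ω : ℕ) = Nat.card {k : ℕ | X k ω = true ∧ (a ^ n < (k : ℝ)) ∧ ((k : ℝ) ≤ a ^ (n + 1))}) :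
    (∑' n : ℕ, μ {ω | C + 1 ≤ N n ω} ≠ ⊤) ∧
      ∀ᵐ ω ∂μ, ∀ᶠ n in Filter.atTop, N n ω ≤ C := by
  have hβ : 1 < α * ↑(C + 1) := by
    rw [hC, Nat.cast_succ, ← inv_lt_iff_one_lt_mul₀' hα]
    exact Nat.lt_floor_add_one α⁻¹
  have hblock :
      ∀ n ω, N n ω = #{k ∈ Finset.Ioc ⌊a ^ n⌋₊ ⌊a ^ (n + 1)⌋₊ | X k ω = true} :=
    fun n ω => by rw [hN, Nat.card_setOf_and_lt_cast_le _ (by positivity)]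
  have hsum : ∑' n : ℕ, μ {ω | C + 1 ≤ N n ω} ≠ ⊤ := by
    refine ne_top_of_le_ne_top (ENNReal.mul_ne_top (ENNReal.ofReal_ne_top (r := a ^ (C + 1)))
      (hf.tsum_ofReal_one_div_rpow_comp_pow_ne_top hβ ha)) ?_
    rw [← ENNReal.tsum_mul_left]
    refine ENNReal.tsum_le_tsum fun n => ?_
    simp only [hblock]
    exact hf.measure_le_card_filter_Ioc_le hind hα.le hprob ha n (C + 1)
  refine ⟨hsum, (ae_eventually_notMem hsum).mono fun ω hω => hω.mono fun n hn => ?_⟩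
  simpa using hn

theorem stmt7 {Ω : Type*} [MeasurableSpace Ω] (μ : Measure Ω) [IsProbabilityMeasure μ]
    (α : ℝ) (hα : 0 < α)
    (f : ℝ → ℝ) (hf : Admissible f)
    (C : ℕ) (hC : C = Nat.floor α⁻¹)
    (X : ℕ → Ω → Bool) (hmeas : ∀ k, Measurable (X k))
    (hind : iIndepFun X μ)
    (hprob : ∀ k : ℕ, 1 ≤ k → μ {ω | X k ω = true} = ENNReal.ofReal (1 / (k * f k ^ α)))
    (a : ℝ) (ha : 1 < a)
    (N : ℕ → Ω → ℕ)
    (hN : ∀ n ω, (N n ω : ℕ) = Nat.card {k : ℕ | X k ω = true ∧ (a ^ n < (k : ℝ)) ∧ ((k : ℝ) ≤ a ^ (n + 1))}) :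
    (∑' n : ℕ, μ {ω | C + 1 ≤ N n ω} ≠ ⊤) ∧
      ∀ᵐ ω ∂μ, ∀ᶠ n in Filter.atTop, N n ω ≤ C :=
  stmt7_general μ α hα f hf C hC X hind hprob a ha N hN
end

section
/- Let X = (X_k)_{k≥1} be independent Bernoulli random variables with P[X_k=1] = p_k. Assume Σ_k p_k = ∞ and Σ_k p_k^2 < ∞. Write E_X = {n_1(X) < n_2(X) < ...}. Then almost surely lim_{k→∞} (n_{k+1}(X) − n_k(X)) = ∞, i.e., E_X does not have bounded gaps. -/
/-!
By the second Borel–Cantelli lemma, `Σ pₖ = ∞` makes infinitely many `Xₖ` equal to `1`.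
For a fixed gap `d > 0`, independence gives `P[Xₘ = Xₘ₊d = 1] = pₘ pₘ₊d ≤ pₘ² + pₘ₊d²`,
which is summable, so by the first Borel–Cantelli lemma almost surely only finitely many pairs
of ones lie at distance `d`. Intersecting over all `d`, every gap length below any bound occurs
only finitely often, hence the gaps tend to infinity.
-/

open MeasureTheory ProbabilityTheory Filter
open scoped ENNReal

lemma Nat.tendsto_nth_add_one_sub_nth_atTop {q : ℕ → Prop} (hq : {m | q m}.Infinite)
    (hpairs : ∀ d, 0 < d → {m | q m ∧ q (m + d)}.Finite) :
    Tendsto (fun k => Nat.nth q (k + 1) - Nat.nth q k) atTop atTop := by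
  have hmono := Nat.nth_strictMono (p := q) hq
  refine tendsto_atTop.2 fun d => ?_
  have hshort : (⋃ g ∈ Set.Ioo 0 d, {m | q m ∧ q (m + g)}).Finite :=
    (Set.finite_Ioo 0 d).biUnion fun g hg => hpairs g hg.1
  have hlarge := hmono.tendsto_atTop.eventually
    (Nat.cofinite_eq_atTop ▸ hshort.eventually_cofinite_notMem)
  filter_upwards [hlarge] with k hk
  by_contra! hlt
  have hlt_succ := hmono (Nat.lt_add_one k)
  refine hk (Set.mem_biUnion (x := Nat.nth q (k + 1) - Nat.nth q k) ⟨by omega, hlt⟩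
    ⟨Nat.nth_mem_of_infinite hq k, ?_⟩)
  rw [Nat.add_sub_cancel' hlt_succ.le]
  exact Nat.nth_mem_of_infinite hq (k + 1)

lemma ENNReal.mul_le_sq_add_sq (a b : ℝ≥0∞) : a * b ≤ a ^ 2 + b ^ 2 := by
  rcases le_total a b with h | h
  · calc a * b ≤ b ^ 2 := by rw [sq]; gcongr
      _ ≤ a ^ 2 + b ^ 2 := le_add_self
  · calc a * b ≤ a ^ 2 := by rw [sq]; gcongr
      _ ≤ a ^ 2 + b ^ 2 := le_self_add

lemma ENNReal.tsum_ofReal_eq_top_of_not_summable {α : Type*} {f : α → ℝ}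
    (hf : ∀ a, 0 ≤ f a) (h : ¬Summable f) : ∑' a, ENNReal.ofReal (f a) = ∞ := by
  by_contra hne
  exact h ((ENNReal.summable_toReal hne).congr fun a => ENNReal.toReal_ofReal (hf a))

lemma ProbabilityTheory.iIndepFun.iIndepSet_preimage {Ω ι : Type*} {_ : MeasurableSpace Ω}
    {μ : Measure Ω} {β : ι → Type*} {m : ∀ i, MeasurableSpace (β i)} {f : ∀ i, Ω → β i}
    (h : iIndepFun f μ) {t : ∀ i, Set (β i)} (ht : ∀ i, MeasurableSet (t i)) :
    iIndepSet (fun i => f i ⁻¹' t i) μ :=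
  (iIndepSet_iff_iIndep _ _).2 <| iIndep_of_iIndep_of_le ((iIndepFun_iff_iIndep _ _ _).1 h)
    fun i => MeasurableSpace.generateFrom_le <| by
      rintro _ rfl
      exact comap_measurable (f i) (ht i)

lemma ProbabilityTheory.iIndepSet.ae_finite_setOf_mem_and_mem_add {Ω : Type*}
    {_ : MeasurableSpace Ω} {μ : Measure Ω} {s : ℕ → Set Ω} (hs : iIndepSet s μ)
    (hsq : ∑' k, μ (s k) ^ 2 ≠ ∞) {d : ℕ} (hd : 0 < d) :
    ∀ᵐ ω ∂μ, {m | ω ∈ s m ∧ ω ∈ s (m + d)}.Finite := by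
  refine ae_finite_setOfPred_mem (s := fun m => s m ∩ s (m + d)) (ne_top_of_le_ne_top
    (ENNReal.add_ne_top.2 ⟨hsq, hsq⟩) ?_)
  have hpair (m : ℕ) : μ (s m ∩ s (m + d)) = μ (s m) * μ (s (m + d)) := by
    simpa [Finset.prod_pair (show m ≠ m + d by omega)] using hs.meas_biInter {m, m + d}
  calc ∑' m, μ (s m ∩ s (m + d))
      ≤ ∑' m, (μ (s m) ^ 2 + μ (s (m + d)) ^ 2) :=
        ENNReal.tsum_le_tsum fun m => (hpair m).trans_le (ENNReal.mul_le_sq_add_sq _ _)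
    _ = ∑' m, μ (s m) ^ 2 + ∑' m, μ (s (m + d)) ^ 2 := ENNReal.tsum_add
    _ ≤ ∑' m, μ (s m) ^ 2 + ∑' m, μ (s m) ^ 2 :=
        add_le_add le_rfl (ENNReal.tsum_comp_le_tsum_of_injective (add_left_injective d) _)

theorem stmt8 {Ω : Type*} [MeasurableSpace Ω] (μ : Measure Ω) [IsProbabilityMeasure μ]
    (X : ℕ → Ω → Bool) (hmeas : ∀ k, Measurable (X k))
    (hind : iIndepFun X μ)
    (p : ℕ → ℝ) (hp : ∀ k, p k ∈ Set.Icc (0 : ℝ) 1)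
    (hprob : ∀ k, 1 ≤ k → μ {ω | X k ω = true} = ENNReal.ofReal (p k))
    (hdiv : ¬ Summable p) (hsq : Summable (fun k => p k ^ 2)) :
    ∀ᵐ ω ∂μ, {k : ℕ | X k ω = true}.Infinite ∧
      Filter.Tendsto (fun k : ℕ =>
        Nat.nth (fun m => X m ω = true) (k + 1) - Nat.nth (fun m => X m ω = true) k)
        Filter.atTop Filter.atTop := by
  set s : ℕ → Set Ω := fun k => X k ⁻¹' {true}
  have hsm (k : ℕ) : MeasurableSet (s k) := hmeas k (measurableSet_singleton true)
  have hs : iIndepSet s μ := hind.iIndepSet_preimage fun _ => measurableSet_singleton true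
  -- `hprob` says nothing about `k = 0`, so the first term of both series is split off.
  have hμs (k : ℕ) : μ (s (k + 1)) = ENNReal.ofReal (p (k + 1)) :=
    hprob (k + 1) (Nat.le_add_left 1 k)
  have hsum : ∑' k, μ (s k) = ∞ := by
    rw [tsum_eq_zero_add' ENNReal.summable, ENNReal.add_eq_top]
    refine Or.inr ?_
    simp only [hμs]
    exact ENNReal.tsum_ofReal_eq_top_of_not_summable (fun k => (hp _).1)
      (mt (summable_nat_add_iff 1).1 hdiv)
  have hsum_sq : ∑' k, μ (s k) ^ 2 ≠ ∞ := by
    rw [tsum_eq_zero_add' ENNReal.summable, ENNReal.add_ne_top]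
    refine ⟨ENNReal.pow_ne_top (measure_ne_top μ _), ?_⟩
    simp only [hμs, ← ENNReal.ofReal_pow (hp _).1]
    exact ((summable_nat_add_iff 1).2 hsq).tsum_ofReal_ne_top
  have hfreq : limsup s atTop ∈ ae μ :=
    (mem_ae_iff_prob_eq_one (.measurableSet_limsup hsm)).2 (measure_limsup_eq_one hsm hs hsum)
  filter_upwards [hfreq, (ae_ball_iff (Set.to_countable (Set.Ioi 0))).2
    fun d hd => hs.ae_finite_setOf_mem_and_mem_add hsum_sq hd] with ω hω hpairs
  have hfreq_ω : ∃ᶠ k in atTop, ω ∈ s k := mem_limsup_iff_frequently_mem.1 hω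
  have hinf : {k | X k ω = true}.Infinite := Nat.frequently_atTop_iff_infinite.1 hfreq_ω
  exact ⟨hinf, Nat.tendsto_nth_add_one_sub_nth_atTop hinf hpairs⟩
end
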